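/- Forward stepping maps consecutive equal symbols to consecutive positions: if PBWT_j[i'] = PBWT_j[i'+1], then fore[i'+1][j] = fore[i'][j] + 1. -/

import Mathlib

/-!
`PA_j` is an order isomorphism from positions onto haplotypes ordered by `sortLT S j` (length-`j`
prefixes co-lexicographically, then index), so consecutive positions `i', i'+1` are exactly a
covering pair of that order. If the two haplotypes carry the same symbol at column `j`, any
haplotype between them for `sortLT S (j + 1)` carries that symbol too, hence lies between them
already for `sortLT S j`. So they remain a covering pair for `j + 1`, i.e. they are consecutive in
`PA_{j+1}`.
-/

namespace PBWT

/-- The reversed prefix of length `j` (truncated at `w`) of haplotype `i`: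
used to express the co-lexicographic order of prefixes. -/
def revPrefix {h w : ℕ} (S : Fin h → Fin w → ℕ) (j : ℕ) (i : Fin h) : List ℕ :=
  ((List.range j).filterMap (fun t => if ht : t < w then some (S i ⟨t, ht⟩) else none)).reverse

/-- `PA` is the stable sort of the haplotype indices by the co-lexicographic
order of their prefixes of length `j` (ties broken by original index). -/
def IsStableSort {h w : ℕ} (S : Fin h → Fin w → ℕ) (j : ℕ) (PA : Fin h ≃ Fin h) : Prop :=
  ∀ a b : Fin h, a < b →
    List.Lex (· < ·) (revPrefix S j (PA a)) (revPrefix S j (PA b)) ∨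
      (revPrefix S j (PA a) = revPrefix S j (PA b) ∧ (PA a).val < (PA b).val)

/-- Number of maximal runs of equal adjacent values in the sequence `f`. -/
def runCount {α : Type*} [DecidableEq α] {n : ℕ} (f : Fin n → α) : ℕ :=
  ((List.ofFn f).destutter (· ≠ ·)).length

/-- `h''`: the number of indices `i` with `S i ≠ S (i+1)`. -/
noncomputable def adjDiff {h w : ℕ} (S : Fin h → Fin w → ℕ) : ℕ :=
  Nat.card {i : Fin h // ∃ h1 : (i : ℕ) + 1 < h, S i ≠ S ⟨(i : ℕ) + 1, h1⟩}

def sortLT {h w : ℕ} (S : Fin h → Fin w → ℕ) (j : ℕ) (x y : Fin h) : Prop :=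
  List.Lex (· < ·) (revPrefix S j x) (revPrefix S j y) ∨
    (revPrefix S j x = revPrefix S j y ∧ x.val < y.val)

def RelCovBy {α : Type*} (r : α → α → Prop) (x y : α) : Prop :=
  r x y ∧ ∀ z, r x z → ¬ r z y

theorem covBy_symm_iff_relCovBy {α : Type*} {r : α → α → Prop} {n : ℕ} (e : Fin n ≃ α)
    (he : ∀ a b, r (e a) (e b) ↔ a < b) (x y : α) :
    e.symm x ⋖ e.symm y ↔ RelCovBy r x y := by
  simp only [CovBy, RelCovBy, ← he, Equiv.apply_symm_apply]
  exact and_congr_right fun _ => e.forall_congr_right (q := fun z => r x z → ¬ r z y)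

section sortLT

variable {h w : ℕ} (S : Fin h → Fin w → ℕ)

theorem sortLT_asymm {j : ℕ} {x y : Fin h} (hxy : sortLT S j x y) : ¬ sortLT S j y x := by
  rintro hyx
  rcases hxy with hxy | ⟨exy, lxy⟩ <;> rcases hyx with hyx | ⟨eyx, lyx⟩
  · exact asymm hxy hyx
  · exact irrefl_of (List.Lex (· < ·)) _ (eyx ▸ hxy)
  · exact irrefl_of (List.Lex (· < ·)) _ (exy ▸ hyx)
  · omega

theorem IsStableSort.sortLT_iff {j : ℕ} {PA : Fin h ≃ Fin h} (hPA : IsStableSort S j PA)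
    (a b : Fin h) : sortLT S j (PA a) (PA b) ↔ a < b := by
  refine ⟨fun hab => ?_, hPA a b⟩
  rcases lt_trichotomy a b with hlt | rfl | hgt
  · exact hlt
  · exact absurd hab (sortLT_asymm S hab)
  · exact absurd hab (sortLT_asymm S (hPA b a hgt))

theorem revPrefix_succ {j : ℕ} (hj : j < w) (x : Fin h) :
    revPrefix S (j + 1) x = S x ⟨j, hj⟩ :: revPrefix S j x := by
  simp [revPrefix, List.range_succ, List.filterMap_append, hj]

theorem sortLT_succ_iff_of_eq {j : ℕ} (hj : j < w) {x y : Fin h}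
    (hxy : S x ⟨j, hj⟩ = S y ⟨j, hj⟩) : sortLT S (j + 1) x y ↔ sortLT S j x y := by
  simp [sortLT, revPrefix_succ S hj, hxy, List.lex_cons_iff]

theorem le_of_sortLT_succ {j : ℕ} (hj : j < w) {x y : Fin h}
    (hxy : sortLT S (j + 1) x y) : S x ⟨j, hj⟩ ≤ S y ⟨j, hj⟩ := by
  rw [sortLT, revPrefix_succ S hj, revPrefix_succ S hj] at hxy
  rcases hxy with hlex | ⟨heq, -⟩
  · rcases List.cons_lex_cons_iff.1 hlex with hlt | ⟨heq, -⟩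
    exacts [hlt.le, heq.le]
  · exact (List.head_eq_of_cons_eq heq).le

theorem relCovBy_sortLT_succ_of_eq {j : ℕ} (hj : j < w) {x y : Fin h}
    (hxy : S x ⟨j, hj⟩ = S y ⟨j, hj⟩) (hcov : RelCovBy (sortLT S j) x y) :
    RelCovBy (sortLT S (j + 1)) x y := by
  refine ⟨(sortLT_succ_iff_of_eq S hj hxy).2 hcov.1, fun z hxz hzy => ?_⟩
  have hxz' : S x ⟨j, hj⟩ = S z ⟨j, hj⟩ :=
    (le_of_sortLT_succ S hj hxz).antisymm (hxy ▸ le_of_sortLT_succ S hj hzy)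
  exact hcov.2 z ((sortLT_succ_iff_of_eq S hj hxz').1 hxz)
    ((sortLT_succ_iff_of_eq S hj (hxz'.symm.trans hxy)).1 hzy)

end sortLT

theorem stmt6 (h w : ℕ) (S : Fin h → Fin w → ℕ) (j : ℕ) (hj : j < w)
    (PA1 PA2 : Fin h ≃ Fin h)
    (hPA1 : IsStableSort S j PA1) (hPA2 : IsStableSort S (j + 1) PA2)
    (i1 : Fin h) (hi : (i1 : ℕ) + 1 < h)
    (heq : S (PA1 i1) ⟨j, hj⟩ = S (PA1 ⟨(i1 : ℕ) + 1, hi⟩) ⟨j, hj⟩) :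
    (PA2.symm (PA1 ⟨(i1 : ℕ) + 1, hi⟩)).val = (PA2.symm (PA1 i1)).val + 1 := by
  have hcov1 : PA1.symm (PA1 i1) ⋖ PA1.symm (PA1 ⟨(i1 : ℕ) + 1, hi⟩) := by
    simp only [Equiv.symm_apply_apply, Fin.covBy_iff, Nat.covBy_iff_add_one_eq]
  rw [covBy_symm_iff_relCovBy PA1 hPA1.sortLT_iff] at hcov1
  have hcov2 := (covBy_symm_iff_relCovBy PA2 hPA2.sortLT_iff _ _).2
    (relCovBy_sortLT_succ_of_eq S hj heq hcov1)
  exact (Nat.covBy_iff_add_one_eq.1 (Fin.covBy_iff.1 hcov2)).symm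

end PBWT
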